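/- Let k ≥ 2 be an integer and let F : ℤ → ℤ be any k-step Fibonacci sequence. Then for every integer n, F(n) = ∑_{i=1}^{k} P(k,i) · F(n - k·i). -/

import Mathlib

/-!
Write `G n = ∑_{j=0}^k P(k,j) F(n - k j)`; since `P(k,0) = -1` the claim is `G = 0`.
A `k`-step Fibonacci sequence satisfies `F(n+1) = 2 F(n) - F(n-k)`, and together with the row
recursion of `P` this gives, by induction on the row `m`,
`∑_j P(m,j) (F(n - k j) - F(n - k - k j)) = F(n - k + m) - F(n)`; for `m = k` it says that `G`
is `k`-periodic. As a combination of shifts of `F`, `G` is again `k`-step Fibonacci, so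
`G(n+1) = 2 G(n) - G(n-k) = G(n)`: `G` is constant, and then `G = k G` forces `G = 0`.
-/

/-- The recursive triangle `P` from the paper: `P 0 0 = -1`, `P 0 (j+1) = 0`,
`P (i+1) 0 = -1`, and `P i j = 2 * P (i-1) j - P (i-1) (j-1)` for `i, j ≥ 1`. -/
def P : ℕ → ℕ → ℤ
  | 0, 0 => -1
  | 0, _ + 1 => 0
  | _ + 1, 0 => -1
  | i + 1, j + 1 => 2 * P i (j + 1) - P i j

open Finset Function

variable {R : Type*} [CommRing R]

lemma sum_Icc_one_eq_sum_range {M : Type*} [AddCommMonoid M] (f : ℕ → M) (k : ℕ) :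
    ∑ i ∈ Icc 1 k, f i = ∑ i ∈ range k, f (i + 1) := by
  induction k with
  | zero => rfl
  | succ k ih => rw [sum_Icc_succ_top (by omega), ih, sum_range_succ]

lemma P_zero_right : ∀ i, P i 0 = -1
  | 0 => rfl
  | _ + 1 => rfl

lemma P_succ_succ (i j : ℕ) : P (i + 1) (j + 1) = 2 * P i (j + 1) - P i j := rfl

lemma P_eq_zero_of_lt : ∀ {i j : ℕ}, i < j → P i j = 0
  | 0, _ + 1, _ => rfl
  | i + 1, j + 1, h => by
    rw [P_succ_succ, P_eq_zero_of_lt (by omega : i < j + 1), P_eq_zero_of_lt (by omega : i < j)]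
    rfl

lemma sum_range_P_succ_mul (m : ℕ) (f : ℕ → R) :
    ∑ j ∈ range (m + 2), (P (m + 1) j : R) * f j =
      2 * ∑ j ∈ range (m + 1), (P m j : R) * f j
        - ∑ j ∈ range (m + 1), (P m j : R) * f (j + 1) + f 0 := by
  have shift : ∑ j ∈ range (m + 1), (P m (j + 1) : R) * f (j + 1) =
      ∑ j ∈ range (m + 1), (P m j : R) * f j + f 0 := by
    have h := sum_range_succ' (fun j => (P m j : R) * f j) (m + 1)
    rw [sum_range_succ, P_eq_zero_of_lt (lt_add_one m), P_zero_right] at h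
    push_cast at h
    linear_combination -h
  rw [sum_range_succ', P_zero_right]
  simp only [P_succ_succ, Int.cast_sub, Int.cast_mul, Int.cast_ofNat, sub_mul, mul_assoc,
    sum_sub_distrib, ← mul_sum, shift]
  push_cast
  ring

def triangleComb (k m : ℕ) (F : ℤ → R) (n : ℤ) : R :=
  ∑ j ∈ range (m + 1), (P m j : R) * F (n - k * j)

lemma triangleComb_succ (k m : ℕ) (F : ℤ → R) (n : ℤ) :
    triangleComb k (m + 1) F n =
      2 * triangleComb k m F n - triangleComb k m F (n - k) + F n := by
  have shift (j : ℕ) : F (n - k * (j + 1 : ℕ)) = F (n - k - k * j) := by push_cast; ring_nf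
  simp only [triangleComb, sum_range_P_succ_mul, shift, Nat.cast_zero, mul_zero, sub_zero]

lemma triangleComb_sub_triangleComb {k : ℕ} {F : ℤ → R}
    (hF : ∀ x, F (x + 1) = 2 * F x - F (x - k)) (m : ℕ) (n : ℤ) :
    triangleComb k m F n - triangleComb k m F (n - k) = F (n - k + m) - F n := by
  induction m generalizing n with
  | zero =>
    simp only [triangleComb, zero_add, sum_range_one, P_zero_right, Nat.cast_zero, mul_zero,
      sub_zero, add_zero]
    push_cast
    ring
  | succ m ih =>
    have h := hF (n - k + m)
    rw [show n - k + m - k = n - k - k + m by ring] at h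
    rw [triangleComb_succ, triangleComb_succ, Nat.cast_succ, ← add_assoc]
    linear_combination 2 * ih n - ih (n - k) - h

lemma periodic_triangleComb {k : ℕ} {F : ℤ → R}
    (hF : ∀ x, F (x + 1) = 2 * F x - F (x - k)) :
    Periodic (triangleComb k k F) k := fun n => by
  simpa [sub_eq_zero] using triangleComb_sub_triangleComb hF k (n + k)

def IsKStepFibonacci (k : ℕ) (F : ℤ → R) : Prop :=
  ∀ n : ℤ, F n = ∑ i ∈ Icc 1 k, F (n - i)

namespace IsKStepFibonacci

variable {k : ℕ} {F : ℤ → R}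

lemma add_one (hF : IsKStepFibonacci k F) (n : ℤ) : F (n + 1) = 2 * F n - F (n - k) := by
  have window (x : ℤ) : F (x + 1) = ∑ i ∈ range k, F (x - i) := by
    rw [hF, sum_Icc_one_eq_sum_range]
    refine sum_congr rfl fun i _ => ?_
    push_cast
    ring_nf
  have hn : F n = ∑ i ∈ range k, F (n - (i + 1 : ℕ)) := by
    rw [← sub_add_cancel n 1, window, sub_add_cancel]
    refine sum_congr rfl fun i _ => ?_
    push_cast
    ring_nf
  have telescope := sum_range_sub' (fun i : ℕ => F (n - i)) k
  rw [sum_sub_distrib, ← window, ← hn, Nat.cast_zero, sub_zero] at telescope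
  linear_combination telescope

lemma sum_mul_comp_sub {ι : Type*} (hF : IsKStepFibonacci k F) (s : Finset ι) (c : ι → R)
    (d : ι → ℤ) : IsKStepFibonacci k (fun n => ∑ j ∈ s, c j * F (n - d j)) := by
  intro n
  rw [sum_comm]
  refine sum_congr rfl fun j _ => ?_
  rw [hF (n - d j), mul_sum]
  refine sum_congr rfl fun i _ => ?_
  ring_nf

lemma eq_zero_of_periodic [IsAddTorsionFree R] (hF : IsKStepFibonacci k F) (hper : Periodic F k)
    (hk : k ≠ 1) : F = 0 := by
  have hconst : Periodic F 1 := fun n => by rw [hF.add_one, hper.sub_eq]; ring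
  have hFn (n : ℤ) : F n = F 0 := by simpa using hconst.int_mul n 0
  have h : ((k : ℤ) - 1) • F 0 = 0 := by
    have := hF 0
    simp only [hFn, sum_const, Nat.card_Icc, add_tsub_cancel_right] at this
    rw [sub_smul, natCast_zsmul, ← this, one_smul, sub_self]
  have hk' : (k : ℤ) - 1 ≠ 0 := by omega
  funext n
  rw [hFn, Pi.zero_apply]
  exact (IsAddTorsionFree.zsmul_eq_zero_iff_right hk').mp h

end IsKStepFibonacci

/-- Theorem 1.3: for `k ≥ 2` and any `k`-step Fibonacci sequence `F : ℤ → ℤ`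
(i.e. `F n = ∑_{i=1}^k F (n - i)` for all integers `n`), we have
`F n = ∑_{i=1}^k P k i * F (n - k*i)` for every integer `n`. -/
theorem kstep_subsequence_identity (k : ℕ) (hk : 2 ≤ k) (F : ℤ → ℤ)
    (hF : ∀ n : ℤ, F n = ∑ i ∈ Finset.Icc 1 k, F (n - (i : ℤ))) :
    ∀ n : ℤ, F n = ∑ i ∈ Finset.Icc 1 k, P k i * F (n - (k : ℤ) * (i : ℤ)) := by
  have hFib : IsKStepFibonacci k F := hF
  have hG : triangleComb k k F = 0 :=
    (hFib.sum_mul_comp_sub (range (k + 1)) (fun j => (P k j : ℤ)) (fun j => k * j))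
      |>.eq_zero_of_periodic (periodic_triangleComb hFib.add_one) (by omega)
  intro n
  have h := congrFun hG n
  rw [triangleComb, sum_range_succ', P_zero_right] at h
  rw [sum_Icc_one_eq_sum_range]
  simp only [Int.cast_id, Nat.cast_zero, mul_zero, sub_zero, Pi.zero_apply] at h
  linarith
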